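/- arXiv:2011.10721 — 10 statements merged into one kernel-verified Lean document; each statement's English description precedes it below -/
import Mathlib

section
/- Let α : ℝ → ℝ be a locally Lipschitz extended class K function. Then there exists a function β : ℝ → ℝ → ℝ, depending only on α, such that: (i) for each fixed t ≥ 0 the map s ↦ β s t is strictly increasing on [0,∞) with β 0 t = 0; (ii) for each fixed s ≥ 0 the map t ↦ β s t is nonincreasing on [0,∞) and tends to 0 as t → ∞; and (iii) for all real numbers t₀ < t_f and every continuously differentiable function z : ℝ → ℝ satisfying z(t₀) ≥ 0 and z'(t) ≥ -α(z(t)) for all t ∈ [t₀, t_f), one has z(t) ≥ β (z t₀) (t - t₀) for all t ∈ [t₀, t_f). -/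
open Set Filter Real

/-!
Being Lipschitz on `[0, 1]` and vanishing at `0`, `α` satisfies `α x ≤ K x` there for some
`K > 0`, so a solution of `z' ≥ -α(z)` decays at most like the solution of `y' = -K y`:
`z t ≥ min (z t₀) 1 · e^{-K (t - t₀)}`. Since `1 - e^{-s} ≤ min s 1`, the function
`β s t = (1 - e^{-s}) e^{-K t}` is a lower bound of the required shape.
-/

lemma LocallyLipschitz.exists_pos_le_mul_on_Icc {α : ℝ → ℝ} (hα : LocallyLipschitz α)
    (hα_zero : α 0 = 0) (r : ℝ) : ∃ K : ℝ, 0 < K ∧ ∀ x ∈ Icc 0 r, α x ≤ K * x := by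
  obtain ⟨K, hK⟩ := hα.locallyLipschitzOn.exists_lipschitzOnWith_of_compact
    (isCompact_Icc (a := 0) (b := r))
  refine ⟨K + 1, by positivity, fun x hx => ?_⟩
  have hdist := hK.dist_le_mul x hx 0 ⟨le_rfl, hx.1.trans hx.2⟩
  rw [Real.dist_eq, Real.dist_eq, hα_zero, sub_zero, sub_zero, abs_of_nonneg hx.1] at hdist
  nlinarith [le_abs_self (α x), hx.1]

/-- The barrier is `r e^{-K (x - a)} - ε`: where `z` touches it, either `z < 0` and
`z' ≥ -α(z) > 0`, or `0 ≤ z ≤ r` and `z' ≥ -K z`, which exceeds the barrier's slope by `K ε`. -/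
lemma mul_exp_le_of_neg_le_deriv {α z z' : ℝ → ℝ} {K r a b : ℝ} (hK : 0 < K) (hr : 0 ≤ r)
    (hα_neg : ∀ x < 0, α x < 0) (hα_le : ∀ x ∈ Icc 0 r, α x ≤ K * x)
    (hz : ContinuousOn z (Icc a b)) (hz' : ∀ x ∈ Ico a b, HasDerivWithinAt z (z' x) (Ici x) x)
    (hineq : ∀ x ∈ Ico a b, -α (z x) ≤ z' x) (hza : r ≤ z a) :
    ∀ x ∈ Icc a b, r * exp (-(K * (x - a))) ≤ z x := by
  intro x hx
  refine le_of_forall_sub_le fun ε hε => ?_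
  have hbarrier : ∀ y, HasDerivAt (fun y => ε - r * exp (-(K * (y - a))))
      (K * (r * exp (-(K * (y - a))))) y := fun y => by
    have hlin : HasDerivAt (fun y => -(K * (y - a))) (-K) y := by
      simpa using (((hasDerivAt_id' y).sub_const a).const_mul K).fun_neg
    exact ((hlin.exp.const_mul r).const_sub ε).congr_deriv (by ring)
  have hcross : ∀ y ∈ Ico a b, -z y = ε - r * exp (-(K * (y - a))) →
      -z' y < K * (r * exp (-(K * (y - a)))) := by
    intro y hy hzy
    have hexp_pos := exp_pos (-(K * (y - a)))
    have hexp_le : exp (-(K * (y - a))) ≤ 1 := exp_le_one_iff.2 (by nlinarith [hy.1])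
    have hz'y := hineq y hy
    rcases lt_or_ge (z y) 0 with hneg | hnonneg
    · nlinarith [hα_neg _ hneg, mul_nonneg hK.le (mul_nonneg hr hexp_pos.le)]
    · have hzr : z y ≤ r := by nlinarith
      nlinarith [hα_le _ ⟨hnonneg, hzr⟩]
  have hstart : -z a ≤ ε - r * exp (-(K * (a - a))) := by
    rw [sub_self, mul_zero, neg_zero, exp_zero, mul_one]
    linarith
  have hfence := image_le_of_deriv_right_lt_deriv_boundary hz.neg
    (fun y hy => (hz' y hy).neg) hstart hbarrier hcross hx
  rw [Pi.neg_apply] at hfence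
  linarith

/-- Comparison lemma (Lemma 1): a locally Lipschitz extended class K function `α`
furnishes a class KL-type lower bound `β`, depending only on `α`, for every continuously
differentiable `z` satisfying the differential inequality `z' ≥ -α ∘ z`. -/
theorem comparison_KL_bound
    (α : ℝ → ℝ) (hα_lip : LocallyLipschitz α) (hα_mono : StrictMono α) (hα_zero : α 0 = 0) :
    ∃ β : ℝ → ℝ → ℝ,
      -- (i) for each fixed `t ≥ 0`, `s ↦ β s t` is strictly increasing on `[0,∞)` with `β 0 t = 0`
      (∀ t : ℝ, 0 ≤ t → StrictMonoOn (fun s => β s t) (Set.Ici 0) ∧ β 0 t = 0) ∧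
      -- (ii) for each fixed `s ≥ 0`, `t ↦ β s t` is nonincreasing on `[0,∞)` and tends to `0`
      (∀ s : ℝ, 0 ≤ s → AntitoneOn (fun t => β s t) (Set.Ici 0) ∧
        Tendsto (fun t => β s t) atTop (nhds 0)) ∧
      -- (iii) the comparison estimate
      (∀ t₀ t_f : ℝ, t₀ < t_f → ∀ z : ℝ → ℝ, ContDiff ℝ 1 z →
        0 ≤ z t₀ →
        (∀ t ∈ Set.Ico t₀ t_f, deriv z t ≥ -α (z t)) →
        ∀ t ∈ Set.Ico t₀ t_f, z t ≥ β (z t₀) (t - t₀)) := by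
  obtain ⟨K, hK, hα_le⟩ := hα_lip.exists_pos_le_mul_on_Icc hα_zero 1
  have hα_neg : ∀ x < 0, α x < 0 := fun x hx => hα_zero ▸ hα_mono hx
  have hcoef_mono : StrictMono fun s : ℝ => 1 - exp (-s) := fun s₁ s₂ h => by
    simpa using exp_lt_exp.2 (neg_lt_neg h)
  refine ⟨fun s t => (1 - exp (-s)) * exp (-(K * t)), fun t _ => ⟨?_, by simp⟩,
    fun s hs => ⟨?_, ?_⟩, ?_⟩
  · exact (hcoef_mono.mul_const (exp_pos _)).strictMonoOn _
  · have hcoef : 0 ≤ 1 - exp (-s) := by simpa using hcoef_mono.monotone hs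
    exact fun t₁ _ t₂ _ h => mul_le_mul_of_nonneg_left
      (exp_le_exp.2 (by nlinarith)) hcoef
  · simpa using (tendsto_exp_neg_atTop_nhds_zero.comp
      (tendsto_id.const_mul_atTop hK)).const_mul (1 - exp (-s))
  · intro t₀ t_f _ z hz hz₀ hineq t ht
    have hzdiff := hz.differentiable one_ne_zero
    have hbound := mul_exp_le_of_neg_le_deriv hK (le_min hz₀ zero_le_one) hα_neg
      (fun x hx => hα_le x ⟨hx.1, hx.2.trans (min_le_right _ _)⟩) hzdiff.continuous.continuousOn
      (fun x _ => (hzdiff x).hasDerivAt.hasDerivWithinAt)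
      (fun x hx => hineq x ⟨hx.1, hx.2.trans ht.2⟩) (min_le_left _ _) t ⟨ht.1, le_rfl⟩
    have hcoef : 1 - exp (-z t₀) ≤ min (z t₀) 1 :=
      le_min (by linarith [add_one_le_exp (-z t₀)]) (by linarith [exp_pos (-z t₀)])
    exact (mul_le_mul_of_nonneg_right hcoef (exp_pos _).le).trans hbound
end

section
/- Let α : ℝ → ℝ be a locally Lipschitz extended class K function, let t₀ < t_f be real numbers, and let z : ℝ → ℝ be continuously differentiable on [t₀, t_f) with z'(t) ≥ -α(z(t)) for all t ∈ [t₀, t_f). If z(t₀) > 0, then z(t) > 0 for all t ∈ [t₀, t_f). -/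
open Set Real NNReal

/-!
Near `0` the Lipschitz bound and `α 0 = 0` give `α y ≤ K y`, so wherever `z` is small and
positive it satisfies `z' ≥ -K z`. Such a `z` never meets the barrier `c e^{-(K+1)(t - t₀)}`
started below `z t₀` (with `c` small): at a contact point `z' ≥ -K z > -(K+1) z`, so `z`
decreases strictly slower than the barrier. Hence `z` stays above a positive function.
-/

theorem LocallyLipschitz.exists_dist_le_mul {X Y : Type*} [PseudoMetricSpace X]
    [PseudoMetricSpace Y] {f : X → Y} (hf : LocallyLipschitz f) (x : X) :
    ∃ K : ℝ≥0, ∃ ε > 0, ∀ y, dist y x < ε → dist (f y) (f x) ≤ K * dist y x := by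
  obtain ⟨K, U, hU, hK⟩ := hf x
  obtain ⟨ε, hε, hball⟩ := Metric.mem_nhds_iff.mp hU
  exact ⟨K, ε, hε, fun y hy => hK.dist_le_mul y (hball hy) x (mem_of_mem_nhds hU)⟩

theorem mul_exp_le_of_hasDerivWithinAt_ge_neg_mul {z z' : ℝ → ℝ} {a b K c : ℝ} (hK : 0 ≤ K)
    (hc : 0 < c) (hz : ContinuousOn z (Icc a b))
    (hz' : ∀ x ∈ Ico a b, HasDerivWithinAt z (z' x) (Ici x) x) (ha : c ≤ z a)
    (hineq : ∀ x ∈ Ico a b, 0 < z x → z x ≤ c → -(K * z x) ≤ z' x) :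
    ∀ x ∈ Icc a b, c * exp (-(K + 1) * (x - a)) ≤ z x := by
  set B : ℝ → ℝ := fun x => c * exp (-(K + 1) * (x - a))
  have hB : ∀ x, HasDerivAt (fun x => -B x) ((K + 1) * B x) x := fun x => by
    have h := ((((hasDerivAt_id x).sub_const a).const_mul (-(K + 1))).exp.const_mul c).neg
    exact h.congr_deriv (by simp only [B, id]; ring)
  have hB_le : ∀ x ∈ Ico a b, B x ≤ c := fun x hx =>
    mul_le_of_le_one_right hc.le <| exp_le_one_iff.mpr <|
      mul_nonpos_of_nonpos_of_nonneg (by linarith) (sub_nonneg.mpr hx.1)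
  intro x hx
  refine neg_le_neg_iff.mp <| image_le_of_deriv_right_lt_deriv_boundary hz.neg
    (fun x hx => (hz' x hx).neg) (by simpa [B] using ha) hB (fun y hy hzy => ?_) hx
  have hzy : z y = B y := neg_inj.mp hzy
  have hBy : 0 < B y := by positivity
  have := hineq y hy (hzy ▸ hBy) (hzy ▸ hB_le y hy)
  rw [hzy] at this
  linarith

theorem pos_of_hasDerivWithinAt_ge_neg_mul {z z' : ℝ → ℝ} {a b K ε : ℝ} (hK : 0 ≤ K)
    (hε : 0 < ε) (hz : ContinuousOn z (Icc a b))
    (hz' : ∀ x ∈ Ico a b, HasDerivWithinAt z (z' x) (Ici x) x) (ha : 0 < z a)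
    (hineq : ∀ x ∈ Ico a b, 0 < z x → z x < ε → -(K * z x) ≤ z' x) :
    ∀ x ∈ Icc a b, 0 < z x := by
  have hc : 0 < min (z a) (ε / 2) := lt_min ha (half_pos hε)
  intro x hx
  refine lt_of_lt_of_le (by positivity) <|
    mul_exp_le_of_hasDerivWithinAt_ge_neg_mul hK hc hz hz' (min_le_left _ _)
      (fun y hy hzy hzc => hineq y hy hzy ?_) x hx
  linarith [min_le_right (z a) (ε / 2)]

theorem positivity_preserved_of_diff_ineq_general
    (α : ℝ → ℝ) (hα_lip : LocallyLipschitz α) (hα_zero : α 0 = 0)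
    (t₀ t_f : ℝ) (z : ℝ → ℝ)
    (hz : ContDiffOn ℝ 1 z (Set.Ico t₀ t_f))
    (hineq : ∀ t ∈ Set.Ico t₀ t_f, derivWithin z (Set.Ico t₀ t_f) t ≥ -α (z t))
    (hz₀ : 0 < z t₀) :
    ∀ t ∈ Set.Ico t₀ t_f, 0 < z t := by
  obtain ⟨K, ε, hε, hK⟩ := hα_lip.exists_dist_le_mul 0
  have hα_le : ∀ y, 0 < y → y < ε → α y ≤ K * y := fun y hy hyε => by
    have := hK y (by rwa [Real.dist_0_eq_abs, abs_of_pos hy])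
    rw [hα_zero, Real.dist_0_eq_abs, Real.dist_0_eq_abs, abs_of_pos hy] at this
    exact (le_abs_self _).trans this
  have hderiv : ∀ x ∈ Ico t₀ t_f,
      HasDerivWithinAt z (derivWithin z (Ico t₀ t_f) x) (Ici x) x := fun x hx =>
    ((hz.differentiableOn one_ne_zero x hx).hasDerivWithinAt).mono_of_mem_nhdsWithin <|
      Filter.mem_of_superset (Ico_mem_nhdsGE hx.2) (Ico_subset_Ico_left hx.1)
  intro t ht
  have hsub : Icc t₀ t ⊆ Ico t₀ t_f := Icc_subset_Ico_right ht.2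
  refine pos_of_hasDerivWithinAt_ge_neg_mul K.coe_nonneg hε (hz.continuousOn.mono hsub)
    (fun x hx => hderiv x (hsub (Ico_subset_Icc_self hx))) hz₀
    (fun x hx hzx hzε => ?_) t ⟨ht.1, le_rfl⟩
  linarith [hineq x (hsub (Ico_subset_Icc_self hx)), hα_le (z x) hzx hzε]

/-- Corollary 1: if `α` is a locally Lipschitz extended class K function and `z` is
continuously differentiable on `[t₀, t_f)` with `z' ≥ -α ∘ z` there, then positivity of
`z` at `t₀` is preserved on all of `[t₀, t_f)`. -/
theorem positivity_preserved_of_diff_ineq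
    (α : ℝ → ℝ) (hα_lip : LocallyLipschitz α) (hα_mono : StrictMono α) (hα_zero : α 0 = 0)
    (t₀ t_f : ℝ) (ht : t₀ < t_f) (z : ℝ → ℝ)
    (hz : ContDiffOn ℝ 1 z (Set.Ico t₀ t_f))
    (hineq : ∀ t ∈ Set.Ico t₀ t_f, derivWithin z (Set.Ico t₀ t_f) t ≥ -α (z t))
    (hz₀ : 0 < z t₀) :
    ∀ t ∈ Set.Ico t₀ t_f, 0 < z t :=
  positivity_preserved_of_diff_ineq_general α hα_lip hα_zero t₀ t_f z hz hineq hz₀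
end

section
/- Let f : ℝⁿ → ℝⁿ be locally Lipschitz, let h : ℝⁿ → ℝ be continuously differentiable, and let α : ℝ → ℝ be a locally Lipschitz extended class K function such that L_f h (x) ≥ -α(h(x)) for every x ∈ ℝⁿ with h(x) ≥ 0. Then for every t₀ < t_f and every differentiable curve x : ℝ → ℝⁿ satisfying x'(t) = f(x(t)) for all t ∈ [t₀, t_f), if h(x(t₀)) > 0 then h(x(t)) > 0 for all t ∈ [t₀, t_f); that is, the set Int(C) = {x : h(x) > 0} is forward invariant. -/
/-!
Along a solution, `y = h ∘ x` satisfies `y' ≥ -α(y)` wherever `y ≥ 0`. Since `α` is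
Lipschitz near `0` with `α 0 = 0`, we have `α a ≤ K a` for small `a ≥ 0`, so just before the
first zero `s` of `y` the function obeys `y' ≥ -K y`. Grönwall then bounds `y s` below by a
positive multiple of an earlier value of `y`, contradicting `y s = 0`.
-/

open Set Filter Topology NNReal

lemma LocallyLipschitz.exists_eventually_dist_le {X Y : Type*} [PseudoMetricSpace X]
    [PseudoMetricSpace Y] {f : X → Y} (hf : LocallyLipschitz f) (x : X) :
    ∃ K : ℝ≥0, ∀ᶠ z in 𝓝 x, dist (f z) (f x) ≤ K * dist z x := by
  obtain ⟨K, U, hU, hlip⟩ := hf x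
  exact ⟨K, eventually_of_mem hU fun z hz => hlip.dist_le_mul z hz x (mem_of_mem_nhds hU)⟩

lemma exists_first_zero_of_continuousOn {y : ℝ → ℝ} {a b : ℝ} (hab : a ≤ b)
    (hy : ContinuousOn y (Icc a b)) (ha : 0 < y a) (hb : y b ≤ 0) :
    ∃ s ∈ Ioc a b, y s = 0 ∧ ∀ t ∈ Ico a s, 0 < y t := by
  have hzero : ∀ {c}, a ≤ c → c ≤ b → y c ≤ 0 → ∃ u ∈ Icc a c, y u = 0 := fun hac hcb hc =>
    intermediate_value_Icc' hac (hy.mono (Icc_subset_Icc_right hcb)) ⟨hc, ha.le⟩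
  have hZ : IsCompact (Icc a b ∩ y ⁻¹' {0}) :=
    isCompact_Icc.of_isClosed_subset
      (hy.preimage_isClosed_of_isClosed isClosed_Icc isClosed_singleton) inter_subset_left
  obtain ⟨u, hu, hyu⟩ := hzero hab le_rfl hb
  obtain ⟨s, ⟨hs, hys⟩, hleast⟩ := hZ.exists_isLeast ⟨u, ⟨hu, hyu⟩⟩
  have has : a < s := hs.1.lt_of_ne fun hsa => by simp_all
  refine ⟨s, ⟨has, hs.2⟩, hys, fun t ht => ?_⟩
  by_contra! hyt
  obtain ⟨v, hv, hyv⟩ := hzero ht.1 (ht.2.le.trans hs.2) hyt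
  have := hleast ⟨⟨hv.1, hv.2.trans (ht.2.le.trans hs.2)⟩, hyv⟩
  linarith [hv.2, ht.2]

lemma mul_exp_le_of_neg_mul_le_deriv_right {y y' : ℝ → ℝ} {K a b : ℝ}
    (hy : ContinuousOn y (Icc a b)) (hy' : ∀ t ∈ Ico a b, HasDerivWithinAt y (y' t) (Ici t) t)
    (bound : ∀ t ∈ Ico a b, -K * y t ≤ y' t) :
    ∀ t ∈ Icc a b, y a * Real.exp (-K * (t - a)) ≤ y t := by
  intro t ht
  -- Grönwall's upper bound, applied to `-y`
  have := le_gronwallBound_of_liminf_deriv_right_le (f := -y) (f' := -y') (K := -K) (ε := 0)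
    hy.neg    (fun t ht _ hr => (hy' t ht).neg.liminf_right_slope_le hr) le_rfl
    (fun t ht => by simp only [Pi.neg_apply]; linarith [bound t ht]) t ht
  rw [gronwallBound_ε0, Pi.neg_apply, Pi.neg_apply] at this
  linarith

theorem pos_of_neg_comp_le_deriv {α y y' : ℝ → ℝ} {a b : ℝ} (hα : LocallyLipschitz α)
    (hα0 : α 0 = 0) (hy : ∀ t ∈ Ico a b, HasDerivAt y (y' t) t)
    (hy' : ∀ t ∈ Ico a b, 0 ≤ y t → -α (y t) ≤ y' t) (ha : 0 < y a) :
    ∀ t ∈ Ico a b, 0 < y t := by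
  intro t₁ ht₁
  by_contra! hneg
  have hcont : ∀ t ∈ Ico a b, ContinuousAt y t := fun t ht => (hy t ht).continuousAt
  obtain ⟨s, hs, hys, hpos⟩ := exists_first_zero_of_continuousOn ht₁.1
    (fun t ht => (hcont t ⟨ht.1, ht.2.trans_lt ht₁.2⟩).continuousWithinAt) ha hneg
  have hsb : s < b := hs.2.trans_lt ht₁.2
  obtain ⟨K, hK⟩ := hα.exists_eventually_dist_le 0
  have hy_to_zero : Tendsto y (𝓝 s) (𝓝 0) := hys ▸ (hcont s ⟨hs.1.le, hsb⟩).tendsto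
  have hlin : ∀ᶠ t in 𝓝[<] s, a < t ∧ -K * y t ≤ y' t := by
    filter_upwards [nhdsWithin_le_nhds (hy_to_zero.eventually hK), Ioo_mem_nhdsLT hs.1]
      with t hKt ht
    have hyt := hpos t ⟨ht.1.le, ht.2⟩
    rw [Real.dist_eq, Real.dist_eq, hα0, sub_zero, sub_zero, abs_of_pos hyt] at hKt
    exact ⟨ht.1, by linarith [hy' t ⟨ht.1.le, ht.2.trans hsb⟩ hyt.le, le_abs_self (α (y t))]⟩
  obtain ⟨τ, hτs, hτ⟩ := mem_nhdsLT_iff_exists_Ico_subset.mp hlin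
  have haτ : a < τ := (hτ ⟨le_rfl, hτs⟩).1
  have hgron := mul_exp_le_of_neg_mul_le_deriv_right (a := τ) (b := s)
    (fun t ht => (hcont t ⟨haτ.le.trans ht.1, ht.2.trans_lt hsb⟩).continuousWithinAt)
    (fun t ht => (hy t ⟨haτ.le.trans ht.1, ht.2.trans hsb⟩).hasDerivWithinAt)
    (fun t ht => (hτ ht).2) s ⟨hτs.le, le_rfl⟩
  have : 0 < y τ * Real.exp (-K * (s - τ)) := mul_pos (hpos τ ⟨haτ.le, hτs⟩) (Real.exp_pos _)
  linarith

theorem int_superlevel_forward_invariant_general {n : ℕ}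
    (f : EuclideanSpace ℝ (Fin n) → EuclideanSpace ℝ (Fin n))
    (h : EuclideanSpace ℝ (Fin n) → ℝ) (hh : ContDiff ℝ 1 h)
    (α : ℝ → ℝ) (hα_lip : LocallyLipschitz α) (hα_zero : α 0 = 0)
    (hbar : ∀ x : EuclideanSpace ℝ (Fin n), 0 ≤ h x → fderiv ℝ h x (f x) ≥ -α (h x)) :
    ∀ t₀ t_f : ℝ, t₀ < t_f → ∀ x : ℝ → EuclideanSpace ℝ (Fin n),
      (∀ t ∈ Set.Ico t₀ t_f, HasDerivAt x (f (x t)) t) →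
      0 < h (x t₀) →
      ∀ t ∈ Set.Ico t₀ t_f, 0 < h (x t) := by
  intro t₀ t_f _ x hx hx₀
  refine pos_of_neg_comp_le_deriv (y := h ∘ x) hα_lip hα_zero (fun t ht => ?_)
    (fun t _ hyt => hbar (x t) hyt) hx₀
  exact ((hh.differentiable one_ne_zero) (x t)).hasFDerivAt.comp_hasDerivAt t (hx t ht)

/-- Corollary (first-order CBF set invariance): if the Lie derivative of `h` along `f`
satisfies `L_f h (x) ≥ -α (h x)` on `C = {x : h x ≥ 0}` for a locally Lipschitz extended
class K function `α`, then the set `Int(C) = {x : h x > 0}` is forward invariant along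
the flow of `ẋ = f(x)`. -/
theorem int_superlevel_forward_invariant {n : ℕ}
    (f : EuclideanSpace ℝ (Fin n) → EuclideanSpace ℝ (Fin n)) (hf : LocallyLipschitz f)
    (h : EuclideanSpace ℝ (Fin n) → ℝ) (hh : ContDiff ℝ 1 h)
    (α : ℝ → ℝ) (hα_lip : LocallyLipschitz α) (hα_mono : StrictMono α) (hα_zero : α 0 = 0)
    (hbar : ∀ x : EuclideanSpace ℝ (Fin n), 0 ≤ h x → fderiv ℝ h x (f x) ≥ -α (h x)) :
    ∀ t₀ t_f : ℝ, t₀ < t_f → ∀ x : ℝ → EuclideanSpace ℝ (Fin n),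
      (∀ t ∈ Set.Ico t₀ t_f, HasDerivAt x (f (x t)) t) →
      0 < h (x t₀) →
      ∀ t ∈ Set.Ico t₀ t_f, 0 < h (x t) :=
  int_superlevel_forward_invariant_general f h hh α hα_lip hα_zero hbar
end

section
/- Let h : ℝ → ℝ be given by h(x) = -x², let c ≠ 0 be a real constant, and consider the dynamics ẋ = c. Then: (i) for every extended class K function α and every x ∈ ℝ with h(x) ≥ 0, the barrier condition h'(x)·c ≥ -α(h(x)) holds; yet (ii) the solution x(t) = c·t of ẋ = c with x(0) = 0 (so x(0) ∈ C = {x : h(x) ≥ 0}) satisfies h(x(t)) < 0 for every t ≠ 0. Hence the zero-sublevel barrier condition on C does not render the set C = {x : h(x) ≥ 0} forward invariant when Int(C) = {x : h(x) > 0} is empty. -/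
/-!
If `h ≤ 0` everywhere, then `C = {h ≥ 0}` is the set where `h` attains its maximum, so `h'`
vanishes on `C` (`IsLocalMax.deriv_eq_zero`, which needs no differentiability) and the barrier
condition on `C` reduces to `0 ≥ -α 0 = 0`, whatever the dynamics. For `h x = -x²` the set `C`
is `{0}`, which the flow `x t = c t` leaves at once.
-/

theorem barrier_condition_of_nonpos {h : ℝ → ℝ} (hle : ∀ y, h y ≤ 0) {α : ℝ → ℝ} (hα0 : α 0 = 0)
    {x : ℝ} (hx : 0 ≤ h x) (c : ℝ) : deriv h x * c ≥ -α (h x) := by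
  have hderiv : deriv h x = 0 :=
    IsLocalMax.deriv_eq_zero <| Filter.Eventually.of_forall fun y => (hle y).trans hx
  rw [hderiv, le_antisymm (hle x) hx, hα0]
  simp

/-- Counterexample (Remark 3, first part): for `h x = -x²` and the dynamics `ẋ = c` with
`c ≠ 0`, the barrier condition `h'(x)·c ≥ -α(h x)` holds on `C = {x : h x ≥ 0}` for every
extended class K function `α`, yet the solution `x t = c·t` starting at `x(0) = 0 ∈ C`
leaves `C` immediately: `h (x t) < 0` for every `t ≠ 0`. -/
theorem cbf_condition_does_not_give_invariance_of_C
    (c : ℝ) (hc : c ≠ 0) (h : ℝ → ℝ) (hh : h = fun x => -x ^ 2) :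
    (∀ α : ℝ → ℝ, StrictMono α → α 0 = 0 →
      ∀ x : ℝ, 0 ≤ h x → deriv h x * c ≥ -α (h x)) ∧
    (∀ t : ℝ, t ≠ 0 → h (c * t) < 0) := by
  have hle : ∀ y, h y ≤ 0 := fun y => hh ▸ neg_nonpos.2 (sq_nonneg y)
  refine ⟨fun α _ hα0 x hx => barrier_condition_of_nonpos hle hα0 hx c, fun t ht => ?_⟩
  rw [hh]
  exact neg_neg_of_pos (sq_pos_of_ne_zero (mul_ne_zero hc ht))
end

section
/- Let c = 2√2/(3√3), let α : ℝ → ℝ be given by α(s) = s^(1/3) for s ≥ 0 (α is strictly increasing with α(0) = 0 but not locally Lipschitz at 0), let x₀ > 0, and define z : ℝ → ℝ by z(t) = c·(x₀ - t)^(3/2) for t ≤ x₀ (this is h(x(t)) for h(x) = c·x^(3/2) along the solution x(t) = x₀ - t of ẋ = -1). Then z'(t) = -α(z(t)) for all t ∈ [0, x₀), z(0) > 0, and z(x₀) = 0. Hence the differential inequality z' ≥ -α(z) with a non-locally-Lipschitz extended class K function α does not prevent z from reaching 0 in finite time, so the set {z > 0} loses forward invariance. -/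
open Set

/-- Counterexample (Remark 3, second part): with `c = 2√2/(3√3)`, the non-locally-Lipschitz
extended class K function `α s = s^(1/3)` (for `s ≥ 0`), and `z t = c·(x₀ - t)^(3/2)` for
`t ≤ x₀` (which is `h(x(t))` for `h x = c·x^(3/2)` along the solution `x t = x₀ - t` of
`ẋ = -1`), one has `z' t = -α (z t)` on `[0, x₀)`, `z 0 > 0`, yet `z x₀ = 0`: the
differential inequality with non-Lipschitz `α` does not prevent reaching `0` in finite time. -/
theorem finite_time_zero_for_nonLipschitz_classK
    (c : ℝ) (hc : c = 2 * Real.sqrt 2 / (3 * Real.sqrt 3))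
    (α : ℝ → ℝ) (hα_mono : StrictMono α) (hα_zero : α 0 = 0)
    (hα : ∀ s : ℝ, 0 ≤ s → α s = s ^ ((1 : ℝ) / 3))
    (x₀ : ℝ) (hx₀ : 0 < x₀)
    (z : ℝ → ℝ) (hz : ∀ t : ℝ, t ≤ x₀ → z t = c * (x₀ - t) ^ ((3 : ℝ) / 2)) :
    (∀ t ∈ Set.Ico (0 : ℝ) x₀, HasDerivAt z (-α (z t)) t) ∧ 0 < z 0 ∧ z x₀ = 0 := by
  have hs2 : (0:ℝ) < Real.sqrt 2 := Real.sqrt_pos.mpr (by norm_num)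
  have hs3 : (0:ℝ) < Real.sqrt 3 := Real.sqrt_pos.mpr (by norm_num)
  have hcpos : 0 < c := by rw [hc]; positivity
  have hcsq : c ^ 2 = 8 / 27 := by
    rw [hc]
    have h2 : Real.sqrt 2 ^ 2 = 2 := Real.sq_sqrt (by norm_num)
    have h3 : Real.sqrt 3 ^ 2 = 3 := Real.sq_sqrt (by norm_num)
    field_simp
    ring_nf
    nlinarith [h2, h3]
  have hkey : c ^ ((1:ℝ)/3) = 3/2 * c := by
    have h1 : ((3/2 * c) ^ (3:ℕ)) = c := by nlinarith [hcsq, hcpos]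
    have h2 : ((3/2 * c) ^ (3:ℕ) : ℝ) ^ (((3:ℕ):ℝ)⁻¹) = 3/2 * c :=
      Real.pow_rpow_inv_natCast (by linarith) (by norm_num)
    rw [← h1]
    convert h2 using 2
    norm_num
  refine ⟨?_, ?_, ?_⟩
  · intro t ht
    obtain ⟨ht0, htx⟩ := ht
    have hu : 0 < x₀ - t := by linarith
    have h1 : HasDerivAt (fun s : ℝ => x₀ - s) (-1) t := (hasDerivAt_id t).const_sub x₀
    have h2 : HasDerivAt (fun s : ℝ => (x₀ - s) ^ ((3:ℝ)/2))
        ((3/2 * (x₀ - t) ^ ((3:ℝ)/2 - 1)) * (-1)) t :=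
      (Real.hasDerivAt_rpow_const (Or.inl (ne_of_gt hu))).comp t h1
    have h3 := h2.const_mul c
    have hzt : z t = c * (x₀ - t) ^ ((3:ℝ)/2) := hz t (le_of_lt htx)
    have hzt0 : 0 ≤ z t := by
      rw [hzt]; positivity
    have heq : c * ((3/2 * (x₀ - t) ^ ((3:ℝ)/2 - 1)) * (-1)) = -α (z t) := by
      rw [hα (z t) hzt0, hzt, Real.mul_rpow (le_of_lt hcpos) (by positivity),
        ← Real.rpow_mul (le_of_lt hu), hkey]
      norm_num
      ring
    have h4 : HasDerivAt (fun s => c * (x₀ - s) ^ ((3:ℝ)/2)) (-α (z t)) t := heq ▸ h3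
    apply h4.congr_of_eventuallyEq
    filter_upwards [Filter.Tendsto.eventually_lt_const htx Filter.tendsto_id] with s hs
    exact hz s (le_of_lt hs)
  · rw [hz 0 (le_of_lt hx₀)]
    have : (0:ℝ) < x₀ - 0 := by linarith
    positivity
  · rw [hz x₀ le_rfl, sub_self, Real.zero_rpow (by norm_num), mul_zero]
end

section
/- Let r ≥ 2 be a natural number, let f, g : ℝⁿ → ℝⁿ be smooth (C^∞) maps, let h : ℝⁿ → ℝ be smooth, and let D ⊆ ℝⁿ be an open set such that L_g (L_f^j h) (x) = 0 for all x ∈ D and all j = 0, 1, …, r-2. Let u : ℝ → ℝ be continuous and let x : ℝ → ℝⁿ be differentiable on an interval I with x'(t) = f(x(t)) + g(x(t))·u(t) and x(t) ∈ D for all t ∈ I. Then for each m = 1, …, r-1, the function t ↦ h(x(t)) is m-times differentiable on I and its m-th derivative equals L_f^m h (x(t)); in particular these derivatives do not depend on the control input u. -/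
/-- Lie derivative `L_f h (x) = fderiv ℝ h x (f x)`. -/
noncomputable def lieDeriv {n : ℕ} (f : EuclideanSpace ℝ (Fin n) → EuclideanSpace ℝ (Fin n))
    (h : EuclideanSpace ℝ (Fin n) → ℝ) (x : EuclideanSpace ℝ (Fin n)) : ℝ :=
  fderiv ℝ h x (f x)

/-- Iterated Lie derivative: `L_f^0 h = h`, `L_f^{m+1} h = L_f (L_f^m h)`. -/
noncomputable def lieDerivIter {n : ℕ} (f : EuclideanSpace ℝ (Fin n) → EuclideanSpace ℝ (Fin n))
    (h : EuclideanSpace ℝ (Fin n) → ℝ) : ℕ → EuclideanSpace ℝ (Fin n) → ℝ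
  | 0 => h
  | m + 1 => lieDeriv f (lieDerivIter f h m)

lemma lieDerivIter_contDiff {n : ℕ} {f : EuclideanSpace ℝ (Fin n) → EuclideanSpace ℝ (Fin n)}
    {h : EuclideanSpace ℝ (Fin n) → ℝ} (hf : ContDiff ℝ (⊤ : ℕ∞) f) (hh : ContDiff ℝ (⊤ : ℕ∞) h) :
    ∀ j : ℕ, ContDiff ℝ (⊤ : ℕ∞) (lieDerivIter f h j)
  | 0 => hh
  | j + 1 => by
    have ih := lieDerivIter_contDiff hf hh j
    exact (ih.fderiv_right (by simp)).clm_apply hf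

/-- For a function `h` of relative degree `r` (i.e. `L_g L_f^j h = 0` on `D` for
`j = 0, …, r-2`) along solutions of `ẋ = f(x) + g(x)·u` evolving in `D`, the map
`t ↦ h (x t)` is `m`-times differentiable on the interval `I` for each `m = 1, …, r-1`,
and its `m`-th derivative equals `L_f^m h (x t)`, independently of the control `u`. -/
theorem lower_order_derivs_indep_of_control {n : ℕ} (r : ℕ) (hr : 2 ≤ r)
    (f g : EuclideanSpace ℝ (Fin n) → EuclideanSpace ℝ (Fin n))
    (hf : ContDiff ℝ (⊤ : ℕ∞) f) (hg : ContDiff ℝ (⊤ : ℕ∞) g)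
    (h : EuclideanSpace ℝ (Fin n) → ℝ) (hh : ContDiff ℝ (⊤ : ℕ∞) h)
    (D : Set (EuclideanSpace ℝ (Fin n))) (hD : IsOpen D)
    (hrel : ∀ x ∈ D, ∀ j : ℕ, j + 2 ≤ r → lieDeriv g (lieDerivIter f h j) x = 0)
    (u : ℝ → ℝ) (hu : Continuous u)
    (I : Set ℝ) (hI : I.OrdConnected) (hI' : UniqueDiffOn ℝ I)
    (x : ℝ → EuclideanSpace ℝ (Fin n))
    (hx : ∀ t ∈ I, HasDerivAt x (f (x t) + u t • g (x t)) t)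
    (hxD : ∀ t ∈ I, x t ∈ D) :
    ∀ m : ℕ, 1 ≤ m → m ≤ r - 1 →
      ContDiffOn ℝ m (fun t => h (x t)) I ∧
      ∀ t ∈ I, iteratedDerivWithin m (fun s => h (x s)) I t = lieDerivIter f h m (x t) := by
  set F : ℕ → ℝ → ℝ := fun j t => lieDerivIter f h j (x t) with hF
  have hxc : ContinuousOn x I := fun t ht => ((hx t ht).continuousAt).continuousWithinAt
  -- key derivative computation
  have key : ∀ j : ℕ, j + 2 ≤ r → ∀ t ∈ I, HasDerivAt (F j) (F (j + 1) t) t := by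
    intro j hj t ht
    have hsm := lieDerivIter_contDiff hf hh (f := f) (h := h) j
    have hdiff : HasFDerivAt (lieDerivIter f h j) (fderiv ℝ (lieDerivIter f h j) (x t)) (x t) :=
      (hsm.differentiable (by simp) (x t)).hasFDerivAt
    have comp := (hdiff.comp_hasDerivAt t (hx t ht))
    have : fderiv ℝ (lieDerivIter f h j) (x t) (f (x t) + u t • g (x t)) = F (j + 1) t := by
      rw [map_add, map_smul]
      have hz := hrel (x t) (hxD t ht) j hj
      simp only [lieDeriv] at hz
      simp [hF, lieDerivIter, lieDeriv, hz]
    rwa [this] at comp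
  -- main induction: for j + m + 1 ≤ r, F j is C^m on I with m-th derivative F (j+m)
  have main : ∀ m : ℕ, ∀ j : ℕ, j + m + 1 ≤ r →
      ContDiffOn ℝ m (F j) I ∧ ∀ t ∈ I, iteratedDerivWithin m (F j) I t = F (j + m) t := by
    intro m
    induction m with
    | zero =>
      intro j _
      refine ⟨?_, fun t ht => by simp [iteratedDerivWithin_zero]⟩
      exact contDiffOn_zero.mpr
        (((lieDerivIter_contDiff hf hh j).continuous.comp_continuousOn hxc))
    | succ m ih =>
      intro j hj
      have hj2 : j + 2 ≤ r := by omega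
      have hkey := key j hj2
      have hdiffOn : DifferentiableOn ℝ (F j) I := fun t ht =>
        ((hkey t ht).differentiableAt).differentiableWithinAt
      have hderivWithin : ∀ t ∈ I, derivWithin (F j) I t = F (j + 1) t := fun t ht =>
        ((hkey t ht).hasDerivWithinAt).derivWithin (hI' t ht)
      obtain ⟨ihC, ihD⟩ := ih (j + 1) (by omega)
      constructor
      · rw [show ((m + 1 : ℕ) : WithTop ℕ∞) = (m : WithTop ℕ∞) + 1 by push_cast; ring,
          contDiffOn_succ_iff_derivWithin hI']
        refine ⟨hdiffOn, by simp, ?_⟩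
        exact ihC.congr fun t ht => hderivWithin t ht
      · intro t ht
        rw [iteratedDerivWithin_succ']
        have : iteratedDerivWithin m (derivWithin (F j) I) I t
            = iteratedDerivWithin m (F (j + 1)) I t :=
          iteratedDerivWithin_congr (fun s hs => hderivWithin s hs) ht
        rw [this, ihD t ht]
        congr 1
        omega
  intro m hm1 hmr
  have := main m 0 (by omega)
  simpa [hF, lieDerivIter] using this
end

section
/- Let r ≥ 1 be a natural number, let f, g : ℝⁿ → ℝⁿ be smooth (C^∞) maps, let h : ℝⁿ → ℝ be smooth, and let D ⊆ ℝⁿ be an open set such that L_g (L_f^j h) (x) = 0 for all x ∈ D and all j = 0, 1, …, r-2. Let u : ℝ → ℝ be continuous and let x : ℝ → ℝⁿ be differentiable on an interval I with x'(t) = f(x(t)) + g(x(t))·u(t) and x(t) ∈ D for all t ∈ I. Then t ↦ h(x(t)) is r-times differentiable on I and its r-th derivative equals L_f^r h (x(t)) + L_g (L_f^{r-1} h) (x(t)) · u(t). -/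
/-- For a function `h` of relative degree `r` (i.e. `L_g L_f^j h = 0` on `D` for
`j = 0, …, r-2`) along solutions of `ẋ = f(x) + g(x)·u` evolving in `D`, the map
`t ↦ h (x t)` is `r`-times differentiable on the interval `I` and its `r`-th derivative is
`h^r (x t) = L_f^r h (x t) + L_g L_f^{r-1} h (x t) · u t`. -/
theorem rth_deriv_along_trajectory {n : ℕ} (r : ℕ) (hr : 1 ≤ r)
    (f g : EuclideanSpace ℝ (Fin n) → EuclideanSpace ℝ (Fin n))
    (hf : ContDiff ℝ (⊤ : ℕ∞) f) (hg : ContDiff ℝ (⊤ : ℕ∞) g)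
    (h : EuclideanSpace ℝ (Fin n) → ℝ) (hh : ContDiff ℝ (⊤ : ℕ∞) h)
    (D : Set (EuclideanSpace ℝ (Fin n))) (hD : IsOpen D)
    (hrel : ∀ x ∈ D, ∀ j : ℕ, j + 2 ≤ r → lieDeriv g (lieDerivIter f h j) x = 0)
    (u : ℝ → ℝ) (hu : Continuous u)
    (I : Set ℝ) (hI : I.OrdConnected) (hI' : UniqueDiffOn ℝ I)
    (x : ℝ → EuclideanSpace ℝ (Fin n))
    (hx : ∀ t ∈ I, HasDerivAt x (f (x t) + u t • g (x t)) t)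
    (hxD : ∀ t ∈ I, x t ∈ D) :
    ContDiffOn ℝ r (fun t => h (x t)) I ∧
    ∀ t ∈ I, iteratedDerivWithin r (fun s => h (x s)) I t =
      lieDerivIter f h r (x t) + lieDeriv g (lieDerivIter f h (r - 1)) (x t) * u t := by
  have hx_cont : ContinuousOn x I := fun t ht => (hx t ht).continuousAt.continuousWithinAt
  have hsmooth : ∀ j, ContDiff ℝ (⊤ : ℕ∞) (lieDerivIter f h j) := by
    intro j
    induction j with
    | zero => exact hh
    | succ m ih =>
      exact (ih.fderiv_right (by simp)).clm_apply hf
  have hsmoothg : ∀ j, ContDiff ℝ (⊤ : ℕ∞) (lieDeriv g (lieDerivIter f h j)) := fun j =>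
    ((hsmooth j).fderiv_right (by simp)).clm_apply hg
  have key : ∀ (φ : EuclideanSpace ℝ (Fin n) → ℝ), ContDiff ℝ (⊤ : ℕ∞) φ → ∀ t ∈ I,
      HasDerivAt (fun s => φ (x s))
        (lieDeriv f φ (x t) + lieDeriv g φ (x t) * u t) t := by
    intro φ hφ t ht
    have h1 := (hφ.differentiable (by simp) (x t)).hasFDerivAt.comp_hasDerivAt t (hx t ht)
    have h2 : fderiv ℝ φ (x t) (f (x t) + u t • g (x t))
        = lieDeriv f φ (x t) + lieDeriv g φ (x t) * u t := by
      rw [map_add, map_smul]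
      simp [lieDeriv, smul_eq_mul, mul_comm]
    rwa [h2] at h1
  have dstep : ∀ j, ∀ t ∈ I, derivWithin (fun s => lieDerivIter f h j (x s)) I t
      = lieDerivIter f h (j+1) (x t) + lieDeriv g (lieDerivIter f h j) (x t) * u t := by
    intro j t ht
    have := ((key _ (hsmooth j) t ht).hasDerivWithinAt).derivWithin (hI' t ht)
    rw [this]; rfl
  have hvan : ∀ j, j + 2 ≤ r → ∀ t ∈ I, lieDeriv g (lieDerivIter f h j) (x t) = 0 :=
    fun j hj t ht => hrel (x t) (hxD t ht) j hj
  -- iterated derivative identification up to order r-1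
  have iter_eq : ∀ j, j + 1 ≤ r → ∀ t ∈ I,
      iteratedDerivWithin j (fun s => h (x s)) I t = lieDerivIter f h j (x t) := by
    intro j
    induction j with
    | zero => intro _ t ht; simp [lieDerivIter]
    | succ m ih =>
      intro hm t ht
      rw [iteratedDerivWithin_succ]
      have e1 : derivWithin (iteratedDerivWithin m (fun s => h (x s)) I) I t
          = derivWithin (fun s => lieDerivIter f h m (x s)) I t := by
        apply derivWithin_congr
        · intro y hy; exact ih (by omega) y hy
        · exact ih (by omega) t ht
      rw [e1, dstep m t ht, hvan m (by omega) t ht, zero_mul, add_zero]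
  constructor
  · -- smoothness
    have C : ∀ m, m ≤ r → ContDiffOn ℝ ((m : ℕ) : WithTop ℕ∞) (fun t => lieDerivIter f h (r - m) (x t)) I := by
      intro m
      induction m with
      | zero =>
        intro _
        rw [show ((0:ℕ) : WithTop ℕ∞) = 0 from rfl, contDiffOn_zero]
        exact ((hsmooth r).continuous.comp_continuousOn hx_cont)
      | succ m ih =>
        intro hm
        have hj1 : r - (m + 1) + 1 = r - m := by omega
        have hdiff : DifferentiableOn ℝ (fun t => lieDerivIter f h (r - (m+1)) (x t)) I :=
          fun t ht => ((key _ (hsmooth _) t ht).differentiableAt).differentiableWithinAt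
        rw [show ((m + 1 : ℕ) : WithTop ℕ∞) = (m : ℕ) + 1 by push_cast; ring,
          contDiffOn_succ_iff_derivWithin hI']
        refine ⟨hdiff, fun hω => by simp at hω, ?_⟩
        rcases Nat.eq_zero_or_pos m with hm0 | hm0
        · subst hm0
          rw [show ((0:ℕ) : WithTop ℕ∞) = 0 from rfl, contDiffOn_zero]
          have hcont : ContinuousOn (fun t => lieDerivIter f h (r - 1 + 1) (x t)
              + lieDeriv g (lieDerivIter f h (r - 1)) (x t) * u t) I := by
            refine (((hsmooth _).continuous.comp_continuousOn hx_cont)).add ?_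
            exact (((hsmoothg _).continuous.comp_continuousOn hx_cont)).mul hu.continuousOn
          refine hcont.congr ?_
          intro t ht
          exact dstep (r - 1) t ht
        · have hcd : ContDiffOn ℝ ((m : ℕ) : WithTop ℕ∞) (fun t => lieDerivIter f h (r - m) (x t)) I :=
            ih (by omega)
          refine hcd.congr ?_
          intro t ht
          rw [dstep (r - (m+1)) t ht, hvan (r - (m+1)) (by omega) t ht, zero_mul, add_zero, hj1]
      
    have := C r le_rfl
    simpa [lieDerivIter] using this
  · intro t ht
    obtain ⟨k, rfl⟩ : ∃ k, r = k + 1 := ⟨r - 1, by omega⟩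
    rw [iteratedDerivWithin_succ]
    have e1 : derivWithin (iteratedDerivWithin k (fun s => h (x s)) I) I t
        = derivWithin (fun s => lieDerivIter f h k (x s)) I t := by
      apply derivWithin_congr
      · intro y hy; exact iter_eq k le_rfl y hy
      · exact iter_eq k le_rfl t ht
    rw [e1, dstep k t ht]
    simp
end

section
/- Let r ≥ 1 be a natural number, let F : ℝⁿ → ℝⁿ be a continuous map (the closed-loop vector field), let c_1, …, c_r > 0 be constants, and let α_1, …, α_r : ℝ → ℝ be locally Lipschitz extended class K functions. Let b_0 : ℝⁿ → ℝ be differentiable and define b_j : ℝⁿ → ℝ for j = 1, …, r-1 by b_j(x) = L_F b_{j-1}(x) + c_j · α_j(b_{j-1}(x)), assuming each b_j for j ≤ r-1 is differentiable. Let S = {x ∈ ℝⁿ : b_j(x) > 0 for all j = 0, …, r-1}, and suppose that L_F b_{r-1}(x) ≥ -c_r · α_r(b_{r-1}(x)) for all x ∈ S. Then for every t₀ < t_f and every differentiable curve x : ℝ → ℝⁿ with x'(t) = F(x(t)) for all t ∈ [t₀, t_f) and x(t₀) ∈ S, one has x(t) ∈ S for all t ∈ [t₀, t_f); that is, the set S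 = ⋂_{j=1}^{r} Int(C_j) is forward invariant. -/
open Set

/-- Positivity persistence: if `y > 0` on `[a, τ)` and `y' ≥ -c·α(y)` there, with `α`
locally Lipschitz and `α 0 = 0`, then `y τ > 0`. -/
lemma hocbf_pos_persist {y y' : ℝ → ℝ} {a τ : ℝ} {α : ℝ → ℝ} {c : ℝ}
    (hc : 0 < c) (hLip : LocallyLipschitz α) (h0 : α 0 = 0)
    (haτ : a < τ)
    (hd : ∀ s ∈ Set.Icc a τ, HasDerivAt y (y' s) s)
    (hpos : ∀ s ∈ Set.Ico a τ, 0 < y s)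
    (hineq : ∀ s ∈ Set.Ico a τ, -c * α (y s) ≤ y' s) :
    0 < y τ := by
  by_contra hle
  push_neg at hle
  obtain ⟨K, s, hs, hK⟩ := hLip 0
  obtain ⟨δ, hδ, hball⟩ := Metric.mem_nhds_iff.1 hs
  have hbound : ∀ u : ℝ, 0 ≤ u → u < δ → α u ≤ (K : ℝ) * u := by
    intro u hu hud
    have h1 : u ∈ s := hball (by
      simp [Metric.mem_ball, Real.dist_eq, abs_of_nonneg hu, hud])
    have h2 : (0 : ℝ) ∈ s := hball (Metric.mem_ball_self hδ)
    have hd2 := hK.dist_le_mul u h1 0 h2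
    rw [Real.dist_eq, Real.dist_eq, h0, sub_zero, sub_zero] at hd2
    calc α u ≤ |α u| := le_abs_self _
    _ ≤ (K : ℝ) * |u| := hd2
    _ = (K : ℝ) * u := by rw [abs_of_nonneg hu]
  have hyτ : ContinuousAt y τ := (hd τ ⟨le_of_lt haτ, le_refl τ⟩).continuousAt
  obtain ⟨ε, hε, hεs⟩ := Metric.continuousAt_iff.1 hyτ δ hδ
  set a' : ℝ := max a (τ - ε / 2) with ha'
  have ha'lt : a' < τ := by
    apply max_lt haτ; linarith
  have ha'ge : a ≤ a' := le_max_left _ _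
  have ha'ge2 : τ - ε / 2 ≤ a' := le_max_right _ _
  have hsmall : ∀ u ∈ Set.Icc a' τ, y u < δ := by
    intro u hu
    have h1 : dist u τ < ε := by
      rw [Real.dist_eq, abs_of_nonpos (by linarith [hu.2])]
      have := ha'ge2.trans hu.1
      linarith
    have h2 := hεs h1
    rw [Real.dist_eq] at h2
    have h3 := abs_lt.1 h2
    linarith [h3.2]
  set g : ℝ → ℝ := fun u => y u * Real.exp (c * K * u) with hg
  have hgd : ∀ u ∈ Set.Icc a τ, HasDerivAt g
      (y' u * Real.exp (c * K * u) + y u * (Real.exp (c * K * u) * (c * K))) u := by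
    intro u hu
    have hexp : HasDerivAt (fun u : ℝ => Real.exp (c * K * u))
        (Real.exp (c * K * u) * (c * K)) u := by
      simpa using ((hasDerivAt_id u).const_mul (c * (K : ℝ))).exp
    exact (hd u hu).mul hexp
  have hmono : MonotoneOn g (Set.Icc a' τ) := by
    apply monotoneOn_of_deriv_nonneg (convex_Icc a' τ)
    · intro u hu
      exact (hgd u ⟨ha'ge.trans hu.1, hu.2⟩).continuousAt.continuousWithinAt
    · intro u hu
      rw [interior_Icc] at hu
      exact (hgd u ⟨ha'ge.trans hu.1.le, hu.2.le⟩).differentiableAt.differentiableWithinAt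
    · intro u hu
      rw [interior_Icc] at hu
      have hu1 : u ∈ Set.Icc a τ := ⟨ha'ge.trans hu.1.le, hu.2.le⟩
      have hu2 : u ∈ Set.Ico a τ := ⟨ha'ge.trans hu.1.le, hu.2⟩
      rw [(hgd u hu1).deriv]
      have hyu : 0 < y u := hpos u hu2
      have hyuδ : y u < δ := hsmall u ⟨hu.1.le, hu.2.le⟩
      have h1 : α (y u) ≤ (K : ℝ) * y u := hbound _ hyu.le hyuδ
      have h2 : -c * α (y u) ≤ y' u := hineq u hu2
      have h3 : (0 : ℝ) < Real.exp (c * K * u) := Real.exp_pos _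
      have hA : 0 ≤ y' u + y u * (c * K) := by nlinarith
      nlinarith [mul_nonneg hA h3.le]
  have hga' : 0 < g a' := by
    have h1 : 0 < y a' := hpos a' ⟨ha'ge, ha'lt⟩
    have h2 : (0 : ℝ) < Real.exp (c * K * a') := Real.exp_pos _
    simp only [hg]
    positivity
  have hgle : g a' ≤ g τ :=
    hmono ⟨le_refl a', ha'lt.le⟩ ⟨ha'lt.le, le_refl τ⟩ ha'lt.le
  have hgτ : g τ ≤ 0 := by
    have h2 : (0 : ℝ) < Real.exp (c * K * τ) := Real.exp_pos _
    simp only [hg]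
    nlinarith
  linarith

/-- Proposition 1 (first part, closed-loop form): given an `r`-th order chain of barrier
functions `b_j = L_F b_{j-1} + c_j α_j (b_{j-1})` with locally Lipschitz extended class K
functions `α_j`, if `L_F b_{r-1} (x) ≥ -c_r α_r (b_{r-1} x)` holds on
`S = ⋂_{j=1}^r Int(C_j) = {x : b_j x > 0, j = 0,…,r-1}`, then `S` is forward invariant
along the flow of `ẋ = F(x)`. -/
theorem hocbf_forward_invariance {n : ℕ} (r : ℕ) (hr : 1 ≤ r)
    (F : EuclideanSpace ℝ (Fin n) → EuclideanSpace ℝ (Fin n)) (hF : Continuous F)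
    (c : ℕ → ℝ) (hc : ∀ j : ℕ, 1 ≤ j → j ≤ r → 0 < c j)
    (α : ℕ → ℝ → ℝ)
    (hα : ∀ j : ℕ, 1 ≤ j → j ≤ r →
      LocallyLipschitz (α j) ∧ StrictMono (α j) ∧ α j 0 = 0)
    (b : ℕ → EuclideanSpace ℝ (Fin n) → ℝ)
    (hbdiff : ∀ j ≤ r - 1, Differentiable ℝ (b j))
    (hbrec : ∀ j : ℕ, 1 ≤ j → j ≤ r - 1 →
      b j = fun x => fderiv ℝ (b (j - 1)) x (F x) + c j * α j (b (j - 1) x))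
    (S : Set (EuclideanSpace ℝ (Fin n)))
    (hS : S = {x | ∀ j ≤ r - 1, 0 < b j x})
    (hbar : ∀ x ∈ S, fderiv ℝ (b (r - 1)) x (F x) ≥ -c r * α r (b (r - 1) x)) :
    ∀ t₀ t_f : ℝ, t₀ < t_f → ∀ x : ℝ → EuclideanSpace ℝ (Fin n),
      (∀ t ∈ Set.Ico t₀ t_f, HasDerivAt x (F (x t)) t) →
      x t₀ ∈ S →
      ∀ t ∈ Set.Ico t₀ t_f, x t ∈ S := by
  intro t₀ t_f htf x hx hx0 t ht
  by_contra hxt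
  -- membership in S in terms of j < r
  have hmem : ∀ z, z ∈ S ↔ ∀ j < r, 0 < b j z := by
    intro z
    rw [hS]
    constructor
    · intro h j hj; exact h j (by omega)
    · intro h j hj; exact h j (by omega)
  -- continuity of the curve on [t₀, t]
  have hxc : ∀ s ∈ Set.Icc t₀ t, ContinuousAt x s := fun s hs =>
    (hx s ⟨hs.1, lt_of_le_of_lt hs.2 ht.2⟩).continuousAt
  -- the bad set
  set T : Set ℝ := ⋃ j ∈ Finset.range r,
    (Set.Icc t₀ t ∩ (fun s => b j (x s)) ⁻¹' Set.Iic 0) with hT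
  have hTclosed : IsClosed T := by
    apply Set.Finite.isClosed_biUnion (Finset.finite_toSet _)
    intro j hj
    rw [Finset.mem_coe, Finset.mem_range] at hj
    apply ContinuousOn.preimage_isClosed_of_isClosed _ isClosed_Icc isClosed_Iic
    intro s hs
    exact (((hbdiff j (by omega)).continuous.continuousAt).comp (hxc s hs)).continuousWithinAt
  have hTsub : T ⊆ Set.Icc t₀ t := by
    intro s hs
    simp only [hT, Set.mem_iUnion] at hs
    obtain ⟨j, hj, hs1, _⟩ := hs
    exact hs1
  have hTne : T.Nonempty := by
    rw [hmem] at hxt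
    push_neg at hxt
    obtain ⟨j, hj, hbj⟩ := hxt
    refine ⟨t, ?_⟩
    simp only [hT, Set.mem_iUnion]
    exact ⟨j, Finset.mem_range.2 hj, ⟨ht.1, le_refl t⟩, by simpa using hbj⟩
  have hTbdd : BddBelow T := ⟨t₀, fun s hs => (hTsub hs).1⟩
  set τ : ℝ := sInf T with hτ
  have hτT : τ ∈ T := hTclosed.csInf_mem hTne hTbdd
  have hτIcc : τ ∈ Set.Icc t₀ t := hTsub hτT
  obtain ⟨j0, hj0, hj0le⟩ : ∃ j < r, b j (x τ) ≤ 0 := by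
    have := hτT
    simp only [hT, Set.mem_iUnion] at this
    obtain ⟨j, hj, _, h2⟩ := this
    exact ⟨j, by simpa using hj, by simpa using h2⟩
  -- τ > t₀
  have hτgt : t₀ < τ := by
    rcases lt_or_eq_of_le hτIcc.1 with h | h
    · exact h
    · exfalso
      have := (hmem (x t₀)).1 hx0 j0 hj0
      rw [← h] at hj0le
      linarith
  -- before τ, the curve is in S
  have hbefore : ∀ s ∈ Set.Ico t₀ τ, x s ∈ S := by
    intro s hs
    have hsT : s ∉ T := notMem_of_lt_csInf hs.2 hTbdd
    rw [hmem]
    intro j hj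
    by_contra hbj
    push_neg at hbj
    apply hsT
    simp only [hT, Set.mem_iUnion]
    exact ⟨j, by simpa using hj, ⟨hs.1, hs.2.le.trans hτIcc.2⟩, by simpa using hbj⟩
  -- derivative of s ↦ b j0 (x s)
  have hτlt : τ < t_f := lt_of_le_of_lt hτIcc.2 ht.2
  have hd : ∀ s ∈ Set.Icc t₀ τ, HasDerivAt (fun s => b j0 (x s))
      (fderiv ℝ (b j0) (x s) (F (x s))) s := by
    intro s hs
    exact ((hbdiff j0 (by omega) (x s)).hasFDerivAt).comp_hasDerivAt s
      (hx s ⟨hs.1, lt_of_le_of_lt hs.2 hτlt⟩)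
  have hpos : ∀ s ∈ Set.Ico t₀ τ, 0 < b j0 (x s) := fun s hs =>
    (hmem (x s)).1 (hbefore s hs) j0 hj0
  -- the differential inequality, with the appropriate c and α
  have hfinal : 0 < b j0 (x τ) := by
    by_cases hcase : j0 + 1 < r
    · -- use the recursion for b (j0+1)
      obtain ⟨hLip, _, h0⟩ := hα (j0 + 1) (by omega) (by omega)
      apply hocbf_pos_persist (hc (j0 + 1) (by omega) (by omega)) hLip h0 hτgt hd hpos
      intro s hs
      have hbrec1 := hbrec (j0 + 1) (by omega) (by omega)
      have heq : b (j0 + 1) (x s) =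
          fderiv ℝ (b j0) (x s) (F (x s)) + c (j0 + 1) * α (j0 + 1) (b j0 (x s)) := by
        conv_lhs => rw [hbrec1]
        simp
      have hbpos : 0 < b (j0 + 1) (x s) :=
        (hmem (x s)).1 (hbefore s hs) (j0 + 1) hcase
      rw [heq] at hbpos
      linarith
    · -- j0 = r - 1 : use the barrier hypothesis
      have hj0eq : j0 = r - 1 := by omega
      obtain ⟨hLip, _, h0⟩ := hα r (by omega) (le_refl r)
      apply hocbf_pos_persist (hc r (by omega) (le_refl r)) hLip h0 hτgt hd hpos
      intro s hs
      have := hbar (x s) (hbefore s hs)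
      rw [hj0eq]
      exact this
  linarith
end

section
/- Let r ≥ 1 be a natural number, let c_1, …, c_r > 0 be constants, and let α_1, …, α_r : ℝ → ℝ be locally Lipschitz extended class K functions. Let t₀ < t_f and let z_0, …, z_{r-1} : ℝ → ℝ be continuously differentiable on [t₀, t_f) satisfying z_j(t) = z_{j-1}'(t) + c_j · α_j(z_{j-1}(t)) for all j = 1, …, r-1 and all t ∈ [t₀, t_f). Suppose that for every t ∈ [t₀, t_f) with z_0(t) > 0, z_1(t) > 0, …, z_{r-1}(t) > 0, one has z_{r-1}'(t) ≥ -c_r · α_r(z_{r-1}(t)). If z_j(t₀) > 0 for all j = 0, …, r-1, then z_j(t) > 0 for all j = 0, …, r-1 and all t ∈ [t₀, t_f). -/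
/-!
Suppose some `z j` is not positive at some time, and let `T > t₀` be the first time at which one
of them vanishes. On `[t₀, T)` all `z i` are positive, so the recursion (for `j < r - 1`) or the
barrier condition (for `j = r - 1`) gives `z j' ≥ -c (j+1) α (j+1) (z j)`. As `α (j+1)` is
Lipschitz near `0` and vanishes there, this reads `z j' ≥ -K z j` just before `T`, so
`z j t * exp (K t)` is nondecreasing there and `z j T > 0`.
-/

open Set Filter Topology Asymptotics

lemma DifferentiableOn.hasDerivAt_derivWithin {𝕜 F : Type*} [NontriviallyNormedField 𝕜]
    [NormedAddCommGroup F] [NormedSpace 𝕜 F] {f : 𝕜 → F} {s : Set 𝕜} {x : 𝕜}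
    (hf : DifferentiableOn 𝕜 f s) (hs : s ∈ 𝓝 x) : HasDerivAt f (derivWithin f s x) x :=
  (hf x (mem_of_mem_nhds hs)).hasDerivWithinAt.hasDerivAt hs

lemma LocallyLipschitz.isBigO_sub {E F : Type*} [SeminormedAddCommGroup E]
    [SeminormedAddCommGroup F] {f : E → F} (hf : LocallyLipschitz f) (x : E) :
    (fun y => f y - f x) =O[𝓝 x] (fun y => y - x) := by
  obtain ⟨K, U, hU, hK⟩ := hf x
  refine IsBigO.of_bound K (eventually_of_mem hU fun y hy => ?_)
  simpa only [← dist_eq_norm] using hK.dist_le_mul y hy x (mem_of_mem_nhds hU)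

lemma exists_first_nonpos {ι : Type*} {s : Set ι} (hs : s.Finite) {g : ι → ℝ → ℝ} {a b : ℝ}
    (hab : a ≤ b) (hg : ∀ i ∈ s, ContinuousOn (g i) (Icc a b)) (ha : ∀ i ∈ s, 0 < g i a)
    (hb : ∃ i ∈ s, g i b ≤ 0) :
    ∃ T ∈ Ioc a b, (∀ t ∈ Ico a T, ∀ i ∈ s, 0 < g i t) ∧ ∃ i ∈ s, g i T ≤ 0 := by
  set S := ⋃ i ∈ s, Icc a b ∩ g i ⁻¹' Iic 0
  have mem_S {t : ℝ} : t ∈ S ↔ t ∈ Icc a b ∧ ∃ i ∈ s, g i t ≤ 0 := by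
    simp only [S, mem_iUnion₂, mem_inter_iff, mem_preimage, mem_Iic, exists_prop]
    tauto
  have hS_closed : IsClosed S := hs.isClosed_biUnion fun i hi =>
    (hg i hi).preimage_isClosed_of_isClosed isClosed_Icc isClosed_Iic
  have hS_bdd : BddBelow S := ⟨a, fun t ht => (mem_S.1 ht).1.1⟩
  have hS_ne : S.Nonempty := ⟨b, mem_S.2 ⟨⟨hab, le_rfl⟩, hb⟩⟩
  obtain ⟨⟨haT, hTb⟩, i, hi, hiT⟩ := mem_S.1 (hS_closed.csInf_mem hS_ne hS_bdd)
  refine ⟨sInf S, ⟨haT.lt_of_ne ?_, hTb⟩, fun t ht j hj => ?_, i, hi, hiT⟩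
  · rintro hTa
    exact (ha i hi).not_ge (hTa ▸ hiT)
  · by_contra! hjt
    exact ht.2.not_ge (csInf_le hS_bdd (mem_S.2 ⟨⟨ht.1, ht.2.le.trans hTb⟩, j, hj, hjt⟩))

lemma monotoneOn_mul_exp_of_neg_mul_le_deriv {f f' : ℝ → ℝ} {a b κ : ℝ}
    (hf : ContinuousOn f (Icc a b)) (hf' : ∀ t ∈ Ioo a b, HasDerivAt f (f' t) t)
    (hbound : ∀ t ∈ Ioo a b, -κ * f t ≤ f' t) :
    MonotoneOn (fun t => f t * Real.exp (κ * t)) (Icc a b) := by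
  have hexp (t : ℝ) : HasDerivAt (fun t => Real.exp (κ * t)) (Real.exp (κ * t) * κ) t :=
    ((hasDerivAt_id t).const_mul κ).exp.congr_deriv (by simp)
  refine monotoneOn_of_hasDerivWithinAt_nonneg (convex_Icc a b)
    (f' := fun t => f' t * Real.exp (κ * t) + f t * (Real.exp (κ * t) * κ))
    (hf.mul (by fun_prop)) (fun t ht => ?_) (fun t ht => ?_)
  · rw [interior_Icc] at ht
    exact ((hf' t ht).mul (hexp t)).hasDerivWithinAt
  · rw [interior_Icc] at ht
    have := hbound t ht
    have hpos := Real.exp_pos (κ * t)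
    nlinarith

lemma pos_of_neg_comp_le_deriv_s11 {f f' g : ℝ → ℝ} {a b : ℝ} (hab : a < b)
    (hg : g =O[𝓝 0] id) (hf : ContinuousOn f (Icc a b))
    (hf' : ∀ t ∈ Ioo a b, HasDerivAt f (f' t) t) (hbound : ∀ t ∈ Ioo a b, -g (f t) ≤ f' t)
    (hpos : ∀ t ∈ Ico a b, 0 < f t) :
    0 < f b := by
  have hlim : Tendsto f (𝓝[<] b) (𝓝 (f b)) :=
    ((hf b ⟨hab.le, le_rfl⟩).mono Ico_subset_Icc_self).tendsto.mono_left
      (nhdsWithin_le_of_mem (Ico_mem_nhdsLT hab))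
  have hb_nonneg : 0 ≤ f b :=
    ge_of_tendsto hlim (eventually_of_mem (Ico_mem_nhdsLT hab) fun t ht => (hpos t ht).le)
  refine hb_nonneg.lt_of_ne fun hb_zero => ?_
  obtain ⟨K, hK⟩ := hg.bound
  have hnear : ∀ᶠ t in 𝓝[<] b, t ∈ Ioo a b ∧ ‖g (f t)‖ ≤ K * ‖f t‖ :=
    Filter.Eventually.and (Ioo_mem_nhdsLT hab) ((hb_zero ▸ hlim).eventually hK)
  obtain ⟨σ, hσ, hσ_sub⟩ := (mem_nhdsLT_iff_exists_mem_Ico_Ioo_subset hab).1 hnear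
  have hmono : MonotoneOn (fun t => f t * Real.exp (K * t)) (Icc σ b) := by
    refine monotoneOn_mul_exp_of_neg_mul_le_deriv (hf.mono (Icc_subset_Icc hσ.1 le_rfl))
      (fun t ht => hf' t (hσ_sub ht).1) fun t ht => ?_
    obtain ⟨hta, hgt⟩ := hσ_sub ht
    rw [Real.norm_eq_abs, Real.norm_eq_abs, abs_of_pos (hpos t (Ioo_subset_Ico_self hta))] at hgt
    linarith [le_abs_self (g (f t)), hbound t hta]
  have := hmono ⟨le_rfl, hσ.2.le⟩ ⟨hσ.2.le, le_rfl⟩ hσ.2.le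
  simp only [← hb_zero, zero_mul] at this
  exact this.not_gt (mul_pos (hpos σ hσ) (Real.exp_pos _))

theorem hocbf_scalar_chain_positivity_general (r : ℕ) (hr : 1 ≤ r)
    (c : ℕ → ℝ)
    (α : ℕ → ℝ → ℝ)
    (hα : ∀ j : ℕ, 1 ≤ j → j ≤ r →
      LocallyLipschitz (α j) ∧ StrictMono (α j) ∧ α j 0 = 0)
    (t₀ t_f : ℝ)
    (z : ℕ → ℝ → ℝ)
    (hz : ∀ j ≤ r - 1, ContDiffOn ℝ 1 (z j) (Set.Ico t₀ t_f))
    (hrec : ∀ j : ℕ, 1 ≤ j → j ≤ r - 1 → ∀ t ∈ Set.Ico t₀ t_f,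
      z j t = derivWithin (z (j - 1)) (Set.Ico t₀ t_f) t + c j * α j (z (j - 1) t))
    (hbar : ∀ t ∈ Set.Ico t₀ t_f, (∀ j ≤ r - 1, 0 < z j t) →
      derivWithin (z (r - 1)) (Set.Ico t₀ t_f) t ≥ -c r * α r (z (r - 1) t))
    (hinit : ∀ j ≤ r - 1, 0 < z j t₀) :
    ∀ t ∈ Set.Ico t₀ t_f, ∀ j ≤ r - 1, 0 < z j t := by
  have hdecay : ∀ j ≤ r - 1, ∀ t ∈ Ico t₀ t_f, (∀ i ≤ r - 1, 0 < z i t) →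
      -(c (j + 1) * α (j + 1) (z j t)) ≤ derivWithin (z j) (Ico t₀ t_f) t := by
    intro j hj t ht hpos
    rcases hj.lt_or_eq with hj | rfl
    · have := hrec (j + 1) le_add_self hj t ht
      rw [Nat.add_sub_cancel] at this
      linarith [hpos (j + 1) hj]
    · rw [Nat.sub_add_cancel hr]
      linarith [hbar t ht hpos]
  intro t₁ ht₁
  by_contra! hbad
  have hsub : Icc t₀ t₁ ⊆ Ico t₀ t_f := Icc_subset_Ico_right ht₁.2
  obtain ⟨T, hT, hbefore, j, hj, hjT⟩ := exists_first_nonpos (finite_Iic (r - 1)) ht₁.1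
    (fun j hj => (hz j hj).continuousOn.mono hsub) hinit hbad
  replace hj : j ≤ r - 1 := hj
  have hTsub : Icc t₀ T ⊆ Icc t₀ t₁ := Icc_subset_Icc_right hT.2
  have hderiv (t : ℝ) (ht : t ∈ Ioo t₀ T) :
      HasDerivAt (z j) (derivWithin (z j) (Ico t₀ t_f) t) t :=
    ((hz j hj).differentiableOn one_ne_zero).hasDerivAt_derivWithin
      (Ico_mem_nhds ht.1 (ht.2.trans_le hT.2 |>.trans ht₁.2))
  obtain ⟨hα_lip, -, hα_zero⟩ := hα (j + 1) le_add_self (by omega)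
  have hα_bigO : (fun y => c (j + 1) * α (j + 1) y) =O[𝓝 0] id := by
    have := (hα_lip.isBigO_sub 0).const_mul_left (c (j + 1))
    simp only [hα_zero, sub_zero] at this
    exact this
  refine hjT.not_gt (pos_of_neg_comp_le_deriv_s11 hT.1 hα_bigO
    ((hz j hj).continuousOn.mono (hsub.trans' hTsub)) hderiv (fun t ht => ?_)
    (fun t ht => hbefore t ht j hj))
  exact hdecay j hj t (hsub (hTsub (Ioo_subset_Icc_self ht))) (hbefore t (Ioo_subset_Ico_self ht))

/-- Scalar chain version of Proposition 1: if `z_j = z_{j-1}' + c_j α_j (z_{j-1})` for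
`j = 1,…,r-1` on `[t₀, t_f)`, the `α_j` are locally Lipschitz extended class K functions,
and `z_{r-1}' ≥ -c_r α_r (z_{r-1})` holds whenever all `z_j` are positive, then positivity
of all `z_j` at `t₀` propagates to all of `[t₀, t_f)`. -/
theorem hocbf_scalar_chain_positivity (r : ℕ) (hr : 1 ≤ r)
    (c : ℕ → ℝ) (hc : ∀ j : ℕ, 1 ≤ j → j ≤ r → 0 < c j)
    (α : ℕ → ℝ → ℝ)
    (hα : ∀ j : ℕ, 1 ≤ j → j ≤ r →
      LocallyLipschitz (α j) ∧ StrictMono (α j) ∧ α j 0 = 0)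
    (t₀ t_f : ℝ) (ht : t₀ < t_f)
    (z : ℕ → ℝ → ℝ)
    (hz : ∀ j ≤ r - 1, ContDiffOn ℝ 1 (z j) (Set.Ico t₀ t_f))
    (hrec : ∀ j : ℕ, 1 ≤ j → j ≤ r - 1 → ∀ t ∈ Set.Ico t₀ t_f,
      z j t = derivWithin (z (j - 1)) (Set.Ico t₀ t_f) t + c j * α j (z (j - 1) t))
    (hbar : ∀ t ∈ Set.Ico t₀ t_f, (∀ j ≤ r - 1, 0 < z j t) →
      derivWithin (z (r - 1)) (Set.Ico t₀ t_f) t ≥ -c r * α r (z (r - 1) t))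
    (hinit : ∀ j ≤ r - 1, 0 < z j t₀) :
    ∀ t ∈ Set.Ico t₀ t_f, ∀ j ≤ r - 1, 0 < z j t :=
  hocbf_scalar_chain_positivity_general r hr c α hα t₀ t_f z hz hrec hbar hinit
end

section
/- Let α : ℝ → ℝ be a locally Lipschitz extended class K function and let w : ℝ → ℝ be differentiable on [0, ∞) with w'(t) = -α(w(t)) for all t ≥ 0 and w(0) > 0. Then: (i) w(t) > 0 for all t ≥ 0; (ii) w is nonincreasing on [0, ∞), with 0 < w(t) ≤ w(0) for all t ≥ 0; and (iii) w(t) → 0 as t → ∞. -/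
open Set Filter

/-!
Positivity: the constant `0` solves `ẇ = -α(w)`, and `α` is Lipschitz on the compact set swept
out by `w`, so by uniqueness of solutions `w` cannot reach `0` in finite time without having been
`0` at time `0`. Since `α` is positive on positive reals, `w` is then nonincreasing. Finally, if
`w ≥ ε > 0` for all time, then `ẇ ≤ -α(ε) < 0`, so `w` would become negative by time
`w 0 / α ε`; hence the infimum of the nonincreasing function `w` is `0`.
-/

theorem ODE_solution_eq_equilibrium_of_mem_Icc_left {E : Type*} [NormedAddCommGroup E]
    [NormedSpace ℝ E] {v : E → E} (hv : LocallyLipschitz v) {x₀ : E} (hx₀ : v x₀ = 0)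
    {w : ℝ → E} {a b : ℝ} (hab : a ≤ b) (hw : ContinuousOn w (Icc a b))
    (hw' : ∀ t ∈ Ioc a b, HasDerivWithinAt w (v (w t)) (Iic t) t) (hb : w b = x₀) :
    w a = x₀ := by
  have hs : IsCompact (insert x₀ (w '' Icc a b)) :=
    (isCompact_Icc.image_of_continuousOn hw).insert x₀
  obtain ⟨K, hK⟩ := hv.locallyLipschitzOn.exists_lipschitzOnWith_of_compact hs
  refine ODE_solution_unique_of_mem_Icc_left (v := fun _ ↦ v) (fun _ _ ↦ hK) hw hw'
    (fun t ht ↦ Or.inr (mem_image_of_mem w (Ioc_subset_Icc_self ht))) continuousOn_const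
    (fun t _ ↦ ?_) (fun _ _ ↦ mem_insert x₀ _) hb ⟨le_rfl, hab⟩
  rw [hx₀]
  exact hasDerivWithinAt_const t _ x₀

theorem pos_of_hasDerivWithinAt_Ici_of_equilibrium_zero {v : ℝ → ℝ} (hv : LocallyLipschitz v)
    (hv₀ : v 0 = 0) {w : ℝ → ℝ} (hw : ∀ t : ℝ, 0 ≤ t → HasDerivWithinAt w (v (w t)) (Ici 0) t)
    (hw₀ : 0 < w 0) {t : ℝ} (ht : 0 ≤ t) : 0 < w t := by
  have hcont : ContinuousOn w (Icc 0 t) := fun s hs ↦ (hw s hs.1).continuousWithinAt.mono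
    Icc_subset_Ici_self
  by_contra! hwt
  obtain ⟨t₀, ht₀, hwt₀⟩ := intermediate_value_Icc' ht hcont ⟨hwt, hw₀.le⟩
  have hcont₀ : ContinuousOn w (Icc 0 t₀) := hcont.mono (Icc_subset_Icc_right ht₀.2)
  have hderiv : ∀ s ∈ Ioc 0 t₀, HasDerivWithinAt w (v (w s)) (Iic s) s := fun s hs ↦
    ((hw s hs.1.le).hasDerivAt (Ici_mem_nhds hs.1)).hasDerivWithinAt
  exact hw₀.ne' (ODE_solution_eq_equilibrium_of_mem_Icc_left hv hv₀ ht₀.1 hcont₀ hderiv hwt₀)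

theorem antitoneOn_Ici_of_hasDerivWithinAt_nonpos {f f' : ℝ → ℝ} {a : ℝ}
    (hf : ∀ t ∈ Ici a, HasDerivWithinAt f (f' t) (Ici a) t) (hf' : ∀ t ∈ Ioi a, f' t ≤ 0) :
    AntitoneOn f (Ici a) := by
  refine antitoneOn_of_hasDerivWithinAt_nonpos (f' := f') (convex_Ici a)
    (fun t ht ↦ (hf t ht).continuousWithinAt) (fun t ht ↦ ?_) (fun t ht ↦ ?_)
  · exact (hf t (interior_subset ht)).mono interior_subset
  · exact hf' t (by rwa [interior_Ici] at ht)

theorem le_sub_mul_of_hasDerivWithinAt_Ici_le_neg {f f' : ℝ → ℝ} {a c : ℝ}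
    (hf : ∀ t ∈ Ici a, HasDerivWithinAt f (f' t) (Ici a) t) (hf' : ∀ t ∈ Ioi a, f' t ≤ -c)
    {t : ℝ} (ht : a ≤ t) : f t ≤ f a - c * (t - a) := by
  have hanti : AntitoneOn (fun s ↦ f s + c * s) (Ici a) :=
    antitoneOn_Ici_of_hasDerivWithinAt_nonpos (f' := fun s ↦ f' s + c)
      (fun s hs ↦ by
        have h := (hf s hs).add ((hasDerivWithinAt_id s _).const_mul c)
        rwa [mul_one] at h)
      (fun s hs ↦ by linarith [hf' s hs])
  linarith [hanti self_mem_Ici ht ht]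

theorem AntitoneOn.tendsto_atTop_of_forall_le_of_exists_lt {f : ℝ → ℝ} {a L : ℝ}
    (hf : AntitoneOn f (Ici a)) (hL : ∀ t ∈ Ici a, L ≤ f t)
    (hlt : ∀ ε > L, ∃ T ∈ Ici a, f T < ε) : Tendsto f atTop (nhds L) := by
  refine tendsto_order.2 ⟨fun ε hε ↦ ?_, fun ε hε ↦ ?_⟩
  · filter_upwards [eventually_ge_atTop a] with t ht using hε.trans_le (hL t ht)
  · obtain ⟨T, hT, hfT⟩ := hlt ε hε
    filter_upwards [eventually_ge_atTop T] with t ht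
      using (hf hT (mem_Ici.2 (le_trans hT ht)) ht).trans_lt hfT

/-- The comparison ODE `ẇ = -α(w)` for a locally Lipschitz extended class K function `α`:
starting from `w 0 > 0`, the solution stays positive, is nonincreasing (so
`0 < w t ≤ w 0` on `[0,∞)`), and tends to `0` at infinity. -/
theorem comparison_ode_flow
    (α : ℝ → ℝ) (hα_lip : LocallyLipschitz α) (hα_mono : StrictMono α) (hα_zero : α 0 = 0)
    (w : ℝ → ℝ)
    (hw : ∀ t : ℝ, 0 ≤ t → HasDerivWithinAt w (-α (w t)) (Set.Ici 0) t)
    (hw0 : 0 < w 0) :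
    (∀ t : ℝ, 0 ≤ t → 0 < w t) ∧
    AntitoneOn w (Set.Ici 0) ∧
    (∀ t : ℝ, 0 ≤ t → 0 < w t ∧ w t ≤ w 0) ∧
    Tendsto w atTop (nhds 0) := by
  have hα_pos {x : ℝ} (hx : 0 < x) : 0 < α x := hα_zero ▸ hα_mono hx
  have hpos : ∀ t : ℝ, 0 ≤ t → 0 < w t := fun t ↦
    pos_of_hasDerivWithinAt_Ici_of_equilibrium_zero (v := fun x ↦ -α x)
      (LipschitzWith.id.neg.locallyLipschitz.comp hα_lip) (by simp [hα_zero]) hw hw0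
  have hanti : AntitoneOn w (Ici 0) := antitoneOn_Ici_of_hasDerivWithinAt_nonpos hw
    fun t ht ↦ neg_nonpos.2 (hα_pos (hpos t (le_of_lt ht))).le
  have hsmall : ∀ ε > 0, ∃ T ∈ Ici (0 : ℝ), w T < ε := by
    intro ε hε
    by_contra! hlarge
    have hdecay := le_sub_mul_of_hasDerivWithinAt_Ici_le_neg hw (c := α ε)
      (fun t ht ↦ neg_le_neg (hα_mono.monotone (hlarge t (Ioi_subset_Ici_self ht))))
      (div_nonneg hw0.le (hα_pos hε).le)
    rw [sub_zero, mul_div_cancel₀ _ (hα_pos hε).ne', sub_self] at hdecay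
    linarith [hlarge _ (div_nonneg hw0.le (hα_pos hε).le)]
  exact ⟨hpos, hanti, fun t ht ↦ ⟨hpos t ht, hanti self_mem_Ici ht ht⟩,
    hanti.tendsto_atTop_of_forall_le_of_exists_lt (fun t ht ↦ (hpos t ht).le) hsmall⟩
end
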